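/- arXiv:2506.18861 — 3 statements merged into one kernel-verified Lean document; each statement's English description precedes it below -/
import Mathlib

section
/- Let G be a Hausdorff topological group, L ≤ G a compact normal subgroup, and Γ ⊆ G a subset. Then every element of Γ is elliptic if and only if every element of the set L·Γ = {l·g : l ∈ L, g ∈ Γ} is elliptic. -/
open scoped Pointwise

/-- An element of a topological group is *elliptic* if the closure of the
subgroup it generates is compact. -/
def IsElliptic {G : Type*} [Group G] [TopologicalSpace G] (g : G) : Prop :=
  IsCompact (closure (Subgroup.zpowers g : Set G))

/-!
Modulo the normal subgroup `L`, the elements `l * g` and `g` coincide, so every power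
`(l * g) ^ n` lies in `L * g ^ n`. Hence the cyclic group generated by `l * g` sits inside the
compact set `L * closure ⟨g⟩`, and so does its closure, since topological groups are regular.
The converse direction is trivial because `Γ ⊆ L * Γ`.
-/

section

variable {G : Type*} [Group G]

theorem Subgroup.Normal.mul_zpow_mul_inv_zpow_mem {N : Subgroup G} [N.Normal] {l : G}
    (hl : l ∈ N) (g : G) (n : ℤ) : (l * g) ^ n * (g ^ n)⁻¹ ∈ N := by
  rw [← QuotientGroup.eq_one_iff, QuotientGroup.mk_mul, QuotientGroup.mk_inv,
    QuotientGroup.mk_zpow, QuotientGroup.mk_zpow, QuotientGroup.mk_mul,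
    (QuotientGroup.eq_one_iff l).2 hl, one_mul, mul_inv_cancel]

theorem Subgroup.Normal.zpowers_mul_subset {N : Subgroup G} [N.Normal] {l : G} (hl : l ∈ N)
    (g : G) : (Subgroup.zpowers (l * g) : Set G) ⊆ (N : Set G) * Subgroup.zpowers g := by
  rintro _ ⟨n, rfl⟩
  exact ⟨_, Subgroup.Normal.mul_zpow_mul_inv_zpow_mem hl g n, g ^ n, ⟨n, rfl⟩,
    inv_mul_cancel_right _ _⟩

theorem IsElliptic.mul_of_mem [TopologicalSpace G] [IsTopologicalGroup G] {L : Subgroup G}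
    [L.Normal] (hL : IsCompact (L : Set G)) {l g : G} (hl : l ∈ L) (hg : IsElliptic g) :
    IsElliptic (l * g) :=
  (hL.mul hg).closure_of_subset <|
    (Subgroup.Normal.zpowers_mul_subset hl g).trans (Set.mul_subset_mul_left subset_closure)

end

theorem pointwiseElliptic_iff_mul_pointwiseElliptic_general {G : Type*} [Group G]
    [TopologicalSpace G] [IsTopologicalGroup G] (L : Subgroup G) [L.Normal]
    (hL : IsCompact (L : Set G)) (Γ : Set G) :
    (∀ g ∈ Γ, IsElliptic g) ↔ ∀ x ∈ (L : Set G) * Γ, IsElliptic x := by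
  refine ⟨?_, fun h g hg => h g (Set.subset_mul_right Γ L.one_mem hg)⟩
  rintro h _ ⟨l, hl, g, hg, rfl⟩
  exact (h g hg).mul_of_mem hL hl

/-- For a Hausdorff topological group `G`, a compact normal subgroup `L` and a
subset `Γ ⊆ G`: every element of `Γ` is elliptic iff every element of
`L·Γ = {l * g : l ∈ L, g ∈ Γ}` is elliptic. -/
theorem pointwiseElliptic_iff_mul_pointwiseElliptic {G : Type*} [Group G]
    [TopologicalSpace G] [IsTopologicalGroup G] [T2Space G] (L : Subgroup G) [L.Normal]
    (hL : IsCompact (L : Set G)) (Γ : Set G) :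
    (∀ g ∈ Γ, IsElliptic g) ↔ ∀ x ∈ (L : Set G) * Γ, IsElliptic x :=
  pointwiseElliptic_iff_mul_pointwiseElliptic_general L hL Γ
end

section
/- Let K be a compact topological group acting continuously by automorphisms on a finite-dimensional real vector space V, and suppose some element s ∈ K acts on V with no nonzero fixed vector. Then every element of V ⋊ K whose K-component is s is elliptic, i.e. generates a relatively compact subgroup of V ⋊ K. -/
/-- The semidirect product `V ⋊ K` of a real vector space `V` by a group `K`
acting linearly via a representation `ρ`, with multiplication
`(v, k)(w, l) = (v + ρ k w, k l)`. -/
@[ext] structure SDP {V K : Type*} [AddCommGroup V] [Module ℝ V] [Group K]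
    (ρ : Representation ℝ K V) where
  fst : V
  snd : K

namespace SDP

variable {V K : Type*} [AddCommGroup V] [Module ℝ V] [Group K]
  {ρ : Representation ℝ K V}

instance : Mul (SDP ρ) := ⟨fun a b => ⟨a.fst + ρ a.snd b.fst, a.snd * b.snd⟩⟩
instance : One (SDP ρ) := ⟨⟨0, 1⟩⟩
instance : Inv (SDP ρ) := ⟨fun a => ⟨-(ρ a.snd⁻¹ a.fst), a.snd⁻¹⟩⟩

@[simp] theorem mul_fst (a b : SDP ρ) : (a * b).fst = a.fst + ρ a.snd b.fst := rfl
@[simp] theorem mul_snd (a b : SDP ρ) : (a * b).snd = a.snd * b.snd := rfl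
@[simp] theorem one_fst : (1 : SDP ρ).fst = 0 := rfl
@[simp] theorem one_snd : (1 : SDP ρ).snd = 1 := rfl
@[simp] theorem inv_fst (a : SDP ρ) : (a⁻¹).fst = -(ρ a.snd⁻¹ a.fst) := rfl
@[simp] theorem inv_snd (a : SDP ρ) : (a⁻¹).snd = a.snd⁻¹ := rfl

instance : Group (SDP ρ) where
  mul_assoc a b c := by
    ext <;> simp [map_mul, Module.End.mul_apply, add_assoc, mul_assoc]
  one_mul a := by ext <;> simp
  mul_one a := by ext <;> simp
  inv_mul_cancel a := by
    ext <;> simp [← map_mul, ← Module.End.mul_apply]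

/-- The product topology on `V ⋊ K`. -/
instance [TopologicalSpace V] [TopologicalSpace K] : TopologicalSpace (SDP ρ) :=
  TopologicalSpace.induced (fun a => (a.fst, a.snd)) inferInstance

/-- The canonical copy `{0} × K` of `K` inside `V ⋊ K`. -/
def core (ρ : Representation ℝ K V) : Subgroup (SDP ρ) where
  carrier := {a | a.fst = 0}
  mul_mem' := by intro a b ha hb; simp_all [Set.mem_setOf_eq]
  one_mem' := rfl
  inv_mem' := by intro a ha; simp_all [Set.mem_setOf_eq]

end SDP

/-!
An element `g = (v, s)` of `V ⋊ K` acts on `V` by the affine map `x ↦ v + s • x`. Since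
`1 - s` is injective, hence surjective on the finite-dimensional space `V`, this map has a
fixed point `w`, so `⟨g⟩` lies in the stabilizer of `w`. That stabilizer is
`{(w - k • w, k) | k ∈ K}`, the conjugate of `K` by the translation by `w`, which is
compact and closed.
-/

theorem IsElliptic.of_mem_of_isCompact_of_isClosed {G : Type*} [Group G] [TopologicalSpace G]
    {H : Subgroup G} {g : G} (hcomp : IsCompact (H : Set G)) (hclosed : IsClosed (H : Set G))
    (hg : g ∈ H) : IsElliptic g :=
  hcomp.of_isClosed_subset isClosed_closure <|
    closure_minimal (Subgroup.zpowers_le.mpr hg) hclosed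

namespace SDP

variable {V K : Type*} [AddCommGroup V] [Module ℝ V] [Group K] {ρ : Representation ℝ K V}

instance : MulAction (SDP ρ) V where
  smul a x := a.fst + ρ a.snd x
  one_smul x := show 0 + ρ 1 x = x by simp
  mul_smul a b x :=
    show (a * b).fst + ρ (a.snd * b.snd) x = a.fst + ρ a.snd (b.fst + ρ b.snd x) by
    rw [mul_fst, map_mul, Module.End.mul_apply, map_add, add_assoc]

theorem smul_def (a : SDP ρ) (x : V) : a • x = a.fst + ρ a.snd x := rfl

theorem mem_stabilizer_iff {a : SDP ρ} {x : V} :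
    a ∈ MulAction.stabilizer (SDP ρ) x ↔ a.fst = x - ρ a.snd x := by
  rw [MulAction.mem_stabilizer_iff, smul_def, eq_sub_iff_add_eq]

theorem exists_smul_eq_self [FiniteDimensional ℝ V] {s : K} (hs : ∀ v : V, ρ s v = v → v = 0)
    (v : V) : ∃ w : V, (⟨v, s⟩ : SDP ρ) • w = w := by
  have hinj : Function.Injective (LinearMap.id - ρ s : V →ₗ[ℝ] V) := by
    rw [← LinearMap.ker_eq_bot, LinearMap.ker_eq_bot']
    intro m hm
    exact hs m (sub_eq_zero.mp hm).symm
  obtain ⟨w, hw⟩ := LinearMap.surjective_of_injective hinj v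
  refine ⟨w, ?_⟩
  rw [smul_def, ← hw]
  exact sub_add_cancel w (ρ s w)

variable [TopologicalSpace V] [TopologicalSpace K]

theorem continuous_fst : Continuous fun a : SDP ρ => a.fst :=
  (continuous_induced_dom : Continuous fun a : SDP ρ => (a.fst, a.snd)).fst

theorem continuous_snd : Continuous fun a : SDP ρ => a.snd :=
  (continuous_induced_dom : Continuous fun a : SDP ρ => (a.fst, a.snd)).snd

theorem continuous_mk {X : Type*} [TopologicalSpace X] {f : X → V} {g : X → K}
    (hf : Continuous f) (hg : Continuous g) : Continuous fun x => (⟨f x, g x⟩ : SDP ρ) :=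
  continuous_induced_rng.mpr (hf.prodMk hg)

theorem isClosed_stabilizer [ContinuousAdd V] [T1Space V] {x : V}
    (hx : Continuous fun k => ρ k x) :
    IsClosed (MulAction.stabilizer (SDP ρ) x : Set (SDP ρ)) :=
  isClosed_singleton.preimage (continuous_fst.add (hx.comp continuous_snd))

theorem isCompact_stabilizer [CompactSpace K] [ContinuousSub V] {x : V}
    (hx : Continuous fun k => ρ k x) :
    IsCompact (MulAction.stabilizer (SDP ρ) x : Set (SDP ρ)) := by
  have : (MulAction.stabilizer (SDP ρ) x : Set (SDP ρ)) =
      Set.range fun k => (⟨x - ρ k x, k⟩ : SDP ρ) := by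
    ext a
    rw [SetLike.mem_coe, mem_stabilizer_iff]
    exact ⟨fun h => ⟨a.snd, SDP.ext h.symm rfl⟩, by rintro ⟨k, rfl⟩; rfl⟩
  rw [this]
  exact isCompact_range (continuous_mk (continuous_const.sub hx) continuous_id)

end SDP

theorem elliptic_of_no_fixed_vector_general {V K : Type*} [NormedAddCommGroup V]
    [NormedSpace ℝ V] [FiniteDimensional ℝ V] [Group K] [TopologicalSpace K]
    [CompactSpace K] (ρ : Representation ℝ K V)
    (hcont : Continuous fun p : K × V => ρ p.1 p.2)
    (s : K) (hs : ∀ v : V, ρ s v = v → v = 0) :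
    ∀ v : V, IsElliptic (⟨v, s⟩ : SDP ρ) := by
  intro v
  obtain ⟨w, hw⟩ := SDP.exists_smul_eq_self hs v
  have hρw : Continuous fun k : K => ρ k w := hcont.comp (.prodMk_left w)
  exact IsElliptic.of_mem_of_isCompact_of_isClosed (SDP.isCompact_stabilizer hρw)
    (SDP.isClosed_stabilizer hρw) hw

/-- Let `K` be a compact topological group acting continuously and linearly on
a finite-dimensional real vector space `V` via `ρ`, and suppose `s ∈ K` acts
with no nonzero fixed vector.  Then every element of `V ⋊ K` whose
`K`-component is `s` is elliptic. -/
theorem elliptic_of_no_fixed_vector {V K : Type*} [NormedAddCommGroup V]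
    [NormedSpace ℝ V] [FiniteDimensional ℝ V] [Group K] [TopologicalSpace K]
    [IsTopologicalGroup K] [CompactSpace K] (ρ : Representation ℝ K V)
    (hcont : Continuous fun p : K × V => ρ p.1 p.2)
    (s : K) (hs : ∀ v : V, ρ s v = v → v = 0) :
    ∀ v : V, IsElliptic (⟨v, s⟩ : SDP ρ) :=
  elliptic_of_no_fixed_vector_general ρ hcont s hs
end

section
/- Let V be a finite-dimensional real vector space, K a compact subgroup of GL(V), and suppose s ∈ K minimizes dim ker(1 − s) over K, with ker(1 − s) ≠ 0. Fix a nonzero v ∈ ker(1 − s). Then there is a neighborhood of (v, s) in V ⋊ K containing no element of the form (−w + s'(w), s') with s' ∈ K and w ∈ V. -/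
open Module

/-- The tautological representation on `V` of a subgroup `K` of `GL(V)`
(realized as units of the ring of continuous linear endomorphisms). -/
def glRep {V : Type*} [NormedAddCommGroup V] [NormedSpace ℝ V]
    (K : Subgroup (V →L[ℝ] V)ˣ) : Representation ℝ K V where
  toFun k := ((((k : (V →L[ℝ] V)ˣ) : V →L[ℝ] V)) : V →ₗ[ℝ] V)
  map_one' := by ext v; simp
  map_mul' k l := by ext v; simp [Module.End.mul_apply]

set_option maxHeartbeats 1600000 in
/-- Let `K ≤ GL(V)` be compact, `s ∈ K` minimizing `dim ker (1 - s)` over `K`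
with `ker (1 - s) ≠ 0`, and `v ∈ ker (1 - s)` nonzero.  Then `(v, s) ∈ V ⋊ K`
has a neighborhood containing no element of the form `(-w + s' w, s')` with
`s' ∈ K`, `w ∈ V` (i.e. `(v, s)` is not approximable by elements conjugate by
translations into `{0} × K`). -/
theorem not_approximable_by_translation_conjugates {V : Type*}
    [NormedAddCommGroup V] [NormedSpace ℝ V] [FiniteDimensional ℝ V]
    (K : Subgroup (V →L[ℝ] V)ˣ) (hK : IsCompact (K : Set (V →L[ℝ] V)ˣ))
    (s : K)
    (hmin : ∀ s' : K,
      finrank ℝ (LinearMap.ker (((1 : V →L[ℝ] V) - ((s : (V →L[ℝ] V)ˣ) : V →L[ℝ] V) : V →L[ℝ] V) : V →ₗ[ℝ] V))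
        ≤ finrank ℝ (LinearMap.ker (((1 : V →L[ℝ] V) - ((s' : (V →L[ℝ] V)ˣ) : V →L[ℝ] V) : V →L[ℝ] V) : V →ₗ[ℝ] V)))
    (v : V) (hv : v ≠ 0) (hvfix : glRep K s v = v) :
    ∃ U : Set (SDP (glRep K)), IsOpen U ∧ (⟨v, s⟩ : SDP (glRep K)) ∈ U ∧
      ∀ (s' : K) (w : V), (⟨-w + glRep K s' w, s'⟩ : SDP (glRep K)) ∉ U := by
  classical
  by_contra hcon
  push_neg at hcon
  set sc : V →L[ℝ] V := ((s : (V →L[ℝ] V)ˣ) : V →L[ℝ] V) with hsc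
  have hind : Topology.IsInducing (fun a : SDP (glRep K) => (a.fst, a.snd)) := ⟨rfl⟩
  have hcont1 : Continuous fun a : SDP (glRep K) => a.fst :=
    continuous_fst.comp hind.continuous
  have hcont2 : Continuous fun a : SDP (glRep K) =>
      ((a.snd : (V →L[ℝ] V)ˣ) : V →L[ℝ] V) :=
    Units.continuous_val.comp (continuous_subtype_val.comp
      (continuous_snd.comp hind.continuous))
  have key : ∀ n : ℕ, ∃ (s' : K) (w : V),
      ‖(-w + glRep K s' w) - v‖ < 1/((n:ℝ)+1) ∧
      ‖((s' : (V →L[ℝ] V)ˣ) : V →L[ℝ] V) - sc‖ < 1/((n:ℝ)+1) := by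
    intro n
    have hpos : (0:ℝ) < 1/((n:ℝ)+1) := by positivity
    obtain ⟨s', w, hmem⟩ := hcon
      ((fun a : SDP (glRep K) => a.fst) ⁻¹' Metric.ball v (1/((n:ℝ)+1)) ∩
       (fun a : SDP (glRep K) => ((a.snd : (V →L[ℝ] V)ˣ) : V →L[ℝ] V)) ⁻¹'
         Metric.ball sc (1/((n:ℝ)+1)))
      ((Metric.isOpen_ball.preimage hcont1).inter (Metric.isOpen_ball.preimage hcont2))
      ⟨by simpa [Metric.mem_ball] using hpos, by simpa [Metric.mem_ball, ← hsc] using hpos⟩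
    refine ⟨s', w, ?_, ?_⟩
    · simpa [Metric.mem_ball, dist_eq_norm] using hmem.1
    · simpa [Metric.mem_ball, dist_eq_norm] using hmem.2
  choose t w hx hT using key
  set x : ℕ → V := fun n => -(w n) + glRep K (t n) (w n) with hxdef
  set T : ℕ → V →L[ℝ] V := fun n => ((t n : (V →L[ℝ] V)ˣ) : V →L[ℝ] V) with hTdef
  set B : V →L[ℝ] V := 1 - sc with hBdef
  set Bn : ℕ → V →L[ℝ] V := fun n => 1 - T n with hBndef
  have hlim : Filter.Tendsto (fun n : ℕ => 1/((n:ℝ)+1)) Filter.atTop (nhds 0) :=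
    tendsto_one_div_add_atTop_nhds_zero_nat
  have hxv : Filter.Tendsto x Filter.atTop (nhds v) := by
    rw [tendsto_iff_norm_sub_tendsto_zero]
    exact squeeze_zero (fun n => norm_nonneg _) (fun n => (hx n).le) hlim
  have hTsc : ∀ z : V, Filter.Tendsto (fun n => Bn n z) Filter.atTop (nhds (B z)) := by
    intro z
    rw [tendsto_iff_norm_sub_tendsto_zero]
    have hb : ∀ n, ‖Bn n z - B z‖ ≤ (1/((n:ℝ)+1)) * ‖z‖ := by
      intro n
      have he : Bn n z - B z = (sc - T n) z := by
        simp only [hBndef, hBdef, ContinuousLinearMap.sub_apply,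
          ContinuousLinearMap.one_apply]
        abel
      rw [he]
      calc ‖(sc - T n) z‖ ≤ ‖sc - T n‖ * ‖z‖ := (sc - T n).le_opNorm z
        _ ≤ (1/((n:ℝ)+1)) * ‖z‖ := by
            have h1 : ‖sc - T n‖ ≤ 1/((n:ℝ)+1) := by rw [norm_sub_rev]; exact (hT n).le
            exact mul_le_mul_of_nonneg_right h1 (norm_nonneg z)
    exact squeeze_zero (fun n => norm_nonneg _) hb (by simpa using hlim.mul_const ‖z‖)
  have hrank : ∀ n, finrank ℝ (LinearMap.range (Bn n : V →ₗ[ℝ] V)) ≤ finrank ℝ (LinearMap.range (B : V →ₗ[ℝ] V)) := by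
    intro n
    have h1 := LinearMap.finrank_range_add_finrank_ker (B : V →ₗ[ℝ] V)
    have h2 := LinearMap.finrank_range_add_finrank_ker ((Bn n) : V →ₗ[ℝ] V)
    have h3 := hmin (t n)
    have e1 : LinearMap.ker (((1 : V →L[ℝ] V) - sc : V →L[ℝ] V) : V →ₗ[ℝ] V) = LinearMap.ker (B : V →ₗ[ℝ] V) := rfl
    have e2 : LinearMap.ker (((1 : V →L[ℝ] V) - T n : V →L[ℝ] V) : V →ₗ[ℝ] V) = LinearMap.ker ((Bn n) : V →ₗ[ℝ] V) := rfl
    rw [e1, e2] at h3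
    have e3 : LinearMap.range (B : V →ₗ[ℝ] V) = LinearMap.range (B : V →ₗ[ℝ] V) := rfl
    have e4 : LinearMap.range ((Bn n) : V →ₗ[ℝ] V) = LinearMap.range (Bn n : V →ₗ[ℝ] V) := rfl
    rw [e3] at h1; rw [e4] at h2
    omega
  set r := finrank ℝ (LinearMap.range (B : V →ₗ[ℝ] V)) with hrdef
  let b : Basis (Fin r) ℝ (LinearMap.range (B : V →ₗ[ℝ] V)) := Module.finBasis ℝ _
  have hy : ∀ i : Fin r, ∃ z : V, B z = ((b i : V)) := fun i => LinearMap.mem_range.1 (b i).2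
  choose y hy using hy
  set u : Fin r → V := fun i => ((b i : V)) with hudef
  have huy : ∀ i, B (y i) = u i := hy
  have hu_li : LinearIndependent ℝ u :=
    b.linearIndependent.map' (LinearMap.range (B : V →ₗ[ℝ] V)).subtype (Submodule.ker_subtype _)
  have hspan : Submodule.span ℝ (Set.range u) = LinearMap.range (B : V →ₗ[ℝ] V) := by
    have h1 := congrArg (Submodule.map (LinearMap.range (B : V →ₗ[ℝ] V)).subtype) b.span_eq
    rw [Submodule.map_span, Submodule.map_subtype_top] at h1
    rw [← h1]
    congr 1
    rw [← Set.range_comp]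
    rfl
  set Ψ : (Fin r → ℝ) →ₗ[ℝ] V := Fintype.linearCombination ℝ u with hΨdef
  have hΨapp : ∀ cc : Fin r → ℝ, Ψ cc = ∑ i, cc i • u i := fun cc => rfl
  have hΨker : LinearMap.ker Ψ = ⊥ := by
    rw [LinearMap.ker_eq_bot']
    intro cc hcc
    have h0 := Fintype.linearIndependent_iff.1 hu_li cc (by rw [← hΨapp]; exact hcc)
    exact funext h0
  obtain ⟨K₀, hK₀pos, hK₀⟩ := Ψ.exists_antilipschitzWith hΨker
  have hK₀' : ∀ cc : Fin r → ℝ, ‖cc‖ ≤ (K₀:ℝ) * ‖Ψ cc‖ := by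
    intro cc
    have h := hK₀.le_mul_dist cc 0
    simpa [dist_zero_right, map_zero] using h
  set δ : ℕ → ℝ := fun n => ∑ i, ‖Bn n (y i) - u i‖ with hδdef
  have hδnn : ∀ n, 0 ≤ δ n := fun n => Finset.sum_nonneg fun i _ => norm_nonneg _
  have hδ0 : Filter.Tendsto δ Filter.atTop (nhds 0) := by
    have h : ∀ i : Fin r, Filter.Tendsto (fun n => ‖Bn n (y i) - u i‖) Filter.atTop (nhds 0) := by
      intro i
      have h1 := tendsto_iff_norm_sub_tendsto_zero.1 (hTsc (y i))
      simpa [huy i] using h1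
    have h2 := tendsto_finset_sum (Finset.univ : Finset (Fin r)) (fun i _ => h i)
    simpa using h2
  have hev1 : ∀ᶠ n in Filter.atTop, LinearIndependent ℝ (fun i => Bn n (y i)) := by
    have hconv : Filter.Tendsto (fun n => fun i => Bn n (y i)) Filter.atTop (nhds u) :=
      tendsto_pi_nhds.2 fun i => by simpa [huy i] using hTsc (y i)
    exact hconv.eventually_mem (isOpen_setOf_linearIndependent.mem_nhds hu_li)
  have hev2 : ∀ᶠ n in Filter.atTop, (K₀:ℝ) * δ n ≤ 1/2 := by
    have h1 : Filter.Tendsto (fun n => (K₀:ℝ) * δ n) Filter.atTop (nhds 0) := by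
      simpa using hδ0.const_mul (K₀:ℝ)
    exact (h1.eventually_lt_const (by norm_num : (0:ℝ) < 1/2)).mono fun n h => h.le
  obtain ⟨N, hN⟩ := Filter.eventually_atTop.1 (hev1.and hev2)
  have hcoef : ∀ n, ∃ cc : Fin r → ℝ, N ≤ n → ∑ i, cc i • Bn n (y i) = x n := by
    intro n
    by_cases hn : N ≤ n
    · have hli := (hN n hn).1
      have hle : Submodule.span ℝ (Set.range fun i => Bn n (y i)) ≤ LinearMap.range (Bn n : V →ₗ[ℝ] V) := by
        rw [Submodule.span_le]
        rintro _ ⟨i, rfl⟩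
        exact LinearMap.mem_range_self _ _
      have heq : Submodule.span ℝ (Set.range fun i => Bn n (y i)) = LinearMap.range (Bn n : V →ₗ[ℝ] V) :=
        Submodule.eq_of_le_of_finrank_le hle (by
          rw [finrank_span_eq_card hli, Fintype.card_fin]
          exact hrank n)
      have hxn : x n ∈ LinearMap.range (Bn n : V →ₗ[ℝ] V) := by
        refine ⟨-(w n), ?_⟩
        have hg : ((glRep K) (t n)) (w n) = T n (w n) := rfl
        show (1 - T n) (-(w n)) = x n
        simp only [hxdef, ContinuousLinearMap.sub_apply, ContinuousLinearMap.one_apply,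
          map_neg, hg]
        abel
      rw [← heq] at hxn
      obtain ⟨cc, hcc⟩ := (Submodule.mem_span_range_iff_exists_fun ℝ).1 hxn
      exact ⟨cc, fun _ => hcc⟩
    · exact ⟨0, fun h => absurd h hn⟩
  choose c hc using hcoef
  have hxb : ∀ n, ‖x n‖ ≤ ‖v‖ + 1 := by
    intro n
    have h0 : (0:ℝ) < (n:ℝ)+1 := by positivity
    have h1 : (1:ℝ)/((n:ℝ)+1) ≤ 1 := by
      rw [div_le_one h0]
      have := Nat.cast_nonneg (α := ℝ) n
      linarith
    have h2 : ‖x n - v‖ ≤ 1 := le_trans (hx n).le h1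
    have h3 := norm_sub_norm_le (x n) v
    linarith
  have hdiff : ∀ n, N ≤ n → ‖Ψ (c n) - x n‖ ≤ ‖c n‖ * δ n := by
    intro n hn
    rw [← hc n hn, hΨapp, ← Finset.sum_sub_distrib]
    refine le_trans (norm_sum_le _ _) ?_
    rw [hδdef, Finset.mul_sum]
    refine Finset.sum_le_sum fun i _ => ?_
    rw [← smul_sub, norm_smul, norm_sub_rev]
    exact mul_le_mul_of_nonneg_right (norm_le_pi_norm (c n) i) (norm_nonneg _)
  have hcb : ∀ n, N ≤ n → ‖c n‖ ≤ 2 * (K₀:ℝ) * (‖v‖ + 1) := by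
    intro n hn
    have h1 := hK₀' (c n)
    have h2 := hdiff n hn
    have h4 : (K₀:ℝ) * δ n ≤ 1/2 := (hN n hn).2
    have h5 : ‖Ψ (c n)‖ ≤ ‖x n‖ + ‖c n‖ * δ n := by
      have h6 := norm_sub_norm_le (Ψ (c n)) (x n)
      linarith
    have h7 : 0 ≤ (K₀:ℝ) := K₀.2
    have h8 := hxb n
    have h9 := hδnn n
    have h10 : 0 ≤ ‖c n‖ := norm_nonneg _
    have t1 : (K₀:ℝ) * ‖Ψ (c n)‖ ≤ (K₀:ℝ) * (‖x n‖ + ‖c n‖ * δ n) :=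
      mul_le_mul_of_nonneg_left h5 h7
    have t2 : ((K₀:ℝ) * δ n) * ‖c n‖ ≤ (1/2) * ‖c n‖ := mul_le_mul_of_nonneg_right h4 h10
    have t3 : (K₀:ℝ) * ‖x n‖ ≤ (K₀:ℝ) * (‖v‖+1) := mul_le_mul_of_nonneg_left h8 h7
    have e : (K₀:ℝ) * (‖x n‖ + ‖c n‖ * δ n) = (K₀:ℝ)*‖x n‖ + ((K₀:ℝ) * δ n) * ‖c n‖ := by ring
    linarith
  have hΨc : Filter.Tendsto (fun n => Ψ (c n)) Filter.atTop (nhds v) := by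
    rw [tendsto_iff_norm_sub_tendsto_zero]
    refine squeeze_zero' (Filter.Eventually.of_forall fun n => norm_nonneg _)
      (g := fun n => (2 * (K₀:ℝ) * (‖v‖ + 1)) * δ n + ‖x n - v‖) ?_ ?_
    · filter_upwards [Filter.eventually_atTop.2 ⟨N, fun n hn => hn⟩] with n hn
      have h1 : ‖Ψ (c n) - v‖ ≤ ‖Ψ (c n) - x n‖ + ‖x n - v‖ := by
        have := norm_add_le (Ψ (c n) - x n) (x n - v)
        simpa using this
      have h2 := hdiff n hn
      have h3 := mul_le_mul_of_nonneg_right (hcb n hn) (hδnn n)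
      linarith
    · have h1 := hδ0.const_mul (2 * (K₀:ℝ) * (‖v‖ + 1))
      have h2 := tendsto_iff_norm_sub_tendsto_zero.1 hxv
      simpa using h1.add h2
  have hvmem : v ∈ LinearMap.range (B : V →ₗ[ℝ] V) := by
    have hcl : IsClosed ((LinearMap.range Ψ : Submodule ℝ V) : Set V) :=
      Submodule.closed_of_finiteDimensional _
    have hvΨ : v ∈ LinearMap.range Ψ :=
      hcl.mem_of_tendsto hΨc (Filter.Eventually.of_forall fun n => LinearMap.mem_range_self _ _)
    obtain ⟨cc, hcc⟩ := hvΨ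
    rw [← hspan, ← hcc, hΨapp]
    exact Submodule.sum_mem _ fun i _ => Submodule.smul_mem _ _ (Submodule.subset_span ⟨i, rfl⟩)
  obtain ⟨z, hz⟩ := hvmem
  have hscv : sc v = v := hvfix
  have hscz : sc z = z - v := by
    have h : z - sc z = v := by
      simpa [hBdef, ContinuousLinearMap.sub_apply, ContinuousLinearMap.one_apply] using hz
    rw [← h]
    abel
  have hpv : ∀ n : ℕ, (sc^n) v = v := by
    intro n
    induction n with
    | zero => simp
    | succ m ih => rw [pow_succ, ContinuousLinearMap.mul_apply, hscv, ih]
  have hpow : ∀ n : ℕ, (sc^n) z = z - (n:ℝ) • v := by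
    intro n
    induction n with
    | zero => simp
    | succ m ih =>
      rw [pow_succ, ContinuousLinearMap.mul_apply, hscz, map_sub, ih, hpv]
      push_cast
      rw [add_smul, one_smul]
      abel
  have hCb : ∃ C : ℝ, ∀ g ∈ (K : Set (V →L[ℝ] V)ˣ), ‖(g : V →L[ℝ] V) z‖ ≤ C := by
    have hcontf : Continuous fun g : (V →L[ℝ] V)ˣ => (g : V →L[ℝ] V) z :=
      (ContinuousLinearMap.apply ℝ V z).continuous.comp Units.continuous_val
    exact hK.exists_bound_of_continuousOn hcontf.continuousOn
  obtain ⟨C, hC⟩ := hCb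
  have hbd : ∀ n : ℕ, ‖z - (n:ℝ) • v‖ ≤ C := by
    intro n
    have h1 : ((s^n : K) : (V →L[ℝ] V)ˣ) ∈ (K : Set (V →L[ℝ] V)ˣ) := (s^n : K).2
    have h2 := hC _ h1
    have h3 : ((((s^n : K) : (V →L[ℝ] V)ˣ)) : V →L[ℝ] V) = sc^n := by
      rw [SubmonoidClass.coe_pow, Units.val_pow_eq_pow_val]
    rw [h3, hpow n] at h2
    exact h2
  have hvpos : 0 < ‖v‖ := norm_pos_iff.2 hv
  obtain ⟨n, hn⟩ := exists_nat_gt ((C + ‖z‖)/‖v‖)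
  have h1 := hbd n
  have h2 : ‖(n:ℝ) • v‖ - ‖z‖ ≤ ‖z - (n:ℝ) • v‖ := by
    have := norm_sub_norm_le ((n:ℝ) • v) z
    rw [norm_sub_rev] at this
    linarith
  have h3 : ‖(n:ℝ) • v‖ = (n:ℝ) * ‖v‖ := by
    rw [norm_smul, Real.norm_natCast]
  rw [div_lt_iff₀ hvpos] at hn
  rw [h3] at h2
  linarith
end
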